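/- For every integer k ≥ 2, a vector c = (k, c_2, c_3, k+1, 1) ∈ ℤ⁵ is cohomology-free if and only if (c_2, c_3) is one of the three pairs (2k, 3k+1), (2k+1, 3k+1), (2k+1, 3k+2). -/

import Mathlib

/-- The primitive ray generators `l₁,…,l₇` of the fan, in counterclockwise order,
acting on `ℤ²` by the dot product. -/
def rayForm : Fin 7 → ℤ × ℤ :=
  ![(1, -1), (2, -1), (3, -1), (1, 0), (0, 1), (-1, 2), (0, -1)]

/-- Extend `c ∈ ℤ⁵` to seven coefficients by `c₆ = c₇ = 0`. -/
def cExt (c : Fin 5 → ℤ) : Fin 7 → ℤ :=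
  fun i => if h : (i : ℕ) < 5 then c ⟨i, h⟩ else 0

/-- `N_c(m) = {i : l_i(m) + c_i < 0}`. -/
def Nset (c : Fin 5 → ℤ) (m : ℤ × ℤ) : Finset (Fin 7) :=
  Finset.univ.filter fun i =>
    (rayForm i).1 * m.1 + (rayForm i).2 * m.2 + cExt c i < 0

/-- A subset of the cyclic index set `Fin 7` is a circular interval if it is empty
or of the form `{a, a+1, …, b}` with indices taken modulo 7. -/
def IsCircularInterval (S : Finset (Fin 7)) : Prop :=
  S = ∅ ∨ ∃ (a : Fin 7) (n : ℕ),
    S = (Finset.range (n + 1)).image fun j : ℕ => a + (⟨j % 7, Nat.mod_lt _ (by norm_num)⟩ : Fin 7)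

/-- `c ∈ ℤ⁵` is cohomology-free if for every `m ∈ ℤ²` and both `ε ∈ {1, -1}`,
the set `N_{εc}(m)` is a circular interval different from the whole index set. -/
def CohomologyFree (c : Fin 5 → ℤ) : Prop :=
  ∀ m : ℤ × ℤ, ∀ ε : ℤ, ε = 1 ∨ ε = -1 →
    IsCircularInterval (Nset (ε • c) m) ∧ Nset (ε • c) m ≠ Finset.univ

/-! A subset of `ℤ/7` other than everything is a circular interval exactly when it has at most
one *right end*, an `i` in the set with `i + 1` outside it. For `c = (k, c₂, c₃, k+1, 1)` each
of the five constraints cutting out the three admissible pairs `(c₂, c₃)` is forced by a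
single explicit `m` at which `N_{±c}(m)` would have two right ends. Conversely, for the three
admissible pairs, `N_{±c}(m)` is cut out by linear inequalities in `m`, and any two right ends
coincide by linear arithmetic; the full set is excluded since the indices 5 and 7 (`4` and `6`
in `Fin 7`) cannot both lie in `N_{εc}(m)`: that would force `0 < m₂ < -ε`. -/

open Finset

lemma circularArc_eq_univ (a : Fin 7) {n : ℕ} (hn : 6 ≤ n) :
    (range (n + 1)).image (fun j : ℕ => a + (⟨j % 7, Nat.mod_lt _ (by norm_num)⟩ : Fin 7)) =
      univ := by
  refine eq_univ_of_forall fun x => mem_image.mpr ⟨(x - a : Fin 7), by simp; omega, ?_⟩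
  simp [Nat.mod_eq_of_lt (x - a).isLt]

lemma isCircularInterval_iff_exists_lt_seven (S : Finset (Fin 7)) :
    IsCircularInterval S ↔ S = ∅ ∨ ∃ a : Fin 7, ∃ n < 7,
      S = (range (n + 1)).image fun j : ℕ => a + (⟨j % 7, Nat.mod_lt _ (by norm_num)⟩ : Fin 7) := by
  refine or_congr_right ⟨fun ⟨a, n, hS⟩ => ?_, fun ⟨a, n, _, hS⟩ => ⟨a, n, hS⟩⟩
  rcases lt_or_ge n 7 with hn | hn
  · exact ⟨a, n, hn, hS⟩
  · refine ⟨a, 6, by norm_num, ?_⟩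
    rw [hS, circularArc_eq_univ a (by omega), circularArc_eq_univ a le_rfl]

set_option maxRecDepth 100000 in
theorem isCircularInterval_and_ne_univ_iff (S : Finset (Fin 7)) :
    IsCircularInterval S ∧ S ≠ univ ↔
      S ≠ univ ∧ ∀ i j, i ∈ S → i + 1 ∉ S → j ∈ S → j + 1 ∉ S → i = j := by
  rw [isCircularInterval_iff_exists_lt_seven]
  revert S
  decide

theorem cohomologyFree_iff (c : Fin 5 → ℤ) :
    CohomologyFree c ↔ ∀ m : ℤ × ℤ, ∀ ε : ℤ, ε = 1 ∨ ε = -1 →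
      Nset (ε • c) m ≠ univ ∧ ∀ i j, i ∈ Nset (ε • c) m → i + 1 ∉ Nset (ε • c) m →
        j ∈ Nset (ε • c) m → j + 1 ∉ Nset (ε • c) m → i = j := by
  simp only [CohomologyFree, isCircularInterval_and_ne_univ_iff]

lemma not_cohomologyFree_of_two_right_ends {c : Fin 5 → ℤ} (m : ℤ × ℤ) (ε : ℤ)
    (hε : ε = 1 ∨ ε = -1) (i j : Fin 7) (hij : i ≠ j)
    (hi : i ∈ Nset (ε • c) m) (hi' : i + 1 ∉ Nset (ε • c) m)
    (hj : j ∈ Nset (ε • c) m) (hj' : j + 1 ∉ Nset (ε • c) m) : ¬CohomologyFree c :=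
  fun hc => hij (((cohomologyFree_iff c).mp hc m ε hε).2 i j hi hi' hj hj')

lemma mem_Nset_iff {c : Fin 5 → ℤ} {m : ℤ × ℤ} {i : Fin 7} :
    i ∈ Nset c m ↔
      (rayForm i).1 * m.1 + (rayForm i).2 * m.2 + ![c 0, c 1, c 2, c 3, c 4, 0, 0] i < 0 := by
  rw [Nset, mem_filter, and_iff_right (mem_univ i)]
  fin_cases i <;> simp [cExt]

theorem c2_c3_cases_of_cohomologyFree {k c2 c3 : ℤ}
    (hc : CohomologyFree ![k, c2, c3, k + 1, 1]) :
    (c2 = 2*k ∧ c3 = 3*k + 1) ∨ (c2 = 2*k + 1 ∧ c3 = 3*k + 1) ∨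
      (c2 = 2*k + 1 ∧ c3 = 3*k + 2) := by
  have h₁ : 2*k ≤ c2 := by
    by_contra! h
    refine not_cohomologyFree_of_two_right_ends (k, 1) (-1) (.inr rfl) 0 3 (by decide)
      ?_ ?_ ?_ ?_ hc <;> simp [mem_Nset_iff, rayForm] <;> omega
  have h₂ : c3 ≤ 3*k + 2 := by
    by_contra! h
    refine not_cohomologyFree_of_two_right_ends (k + 1, 1) (-1) (.inr rfl) 2 6 (by decide)
      ?_ ?_ ?_ ?_ hc <;> simp [mem_Nset_iff, rayForm] <;> omega
  have h₃ : 3*k + 1 ≤ c3 := by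
    by_contra! h
    rcases lt_or_ge k 3 with hk3 | hk3
    · refine not_cohomologyFree_of_two_right_ends (-(k + 1), -2) 1 (.inl rfl) 2 5 (by decide)
        ?_ ?_ ?_ ?_ hc <;> simp [mem_Nset_iff, rayForm] <;> omega
    · refine not_cohomologyFree_of_two_right_ends (-(k + 1), -2) 1 (.inl rfl) 2 4 (by decide)
        ?_ ?_ ?_ ?_ hc <;> simp [mem_Nset_iff, rayForm] <;> omega
  have h₄ : ¬(2*k + 2 ≤ c2 ∧ c3 ≤ 3*k + 2) := by
    rintro ⟨h, h'⟩
    refine not_cohomologyFree_of_two_right_ends (-(k + 1), 0) 1 (.inl rfl) 0 2 (by decide)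
      ?_ ?_ ?_ ?_ hc <;> simp [mem_Nset_iff, rayForm] <;> omega
  have h₅ : ¬(c2 ≤ 2*k ∧ 3*k + 2 ≤ c3) := by
    rintro ⟨h, h'⟩
    refine not_cohomologyFree_of_two_right_ends (k + 1, 2) (-1) (.inr rfl) 0 2 (by decide)
      ?_ ?_ ?_ ?_ hc <;> simp [mem_Nset_iff, rayForm] <;> omega
  omega

theorem cohomologyFree_of_c2_c3_cases {k c2 c3 : ℤ} (hk : 2 ≤ k)
    (h : (c2 = 2*k ∧ c3 = 3*k + 1) ∨ (c2 = 2*k + 1 ∧ c3 = 3*k + 1) ∨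
      (c2 = 2*k + 1 ∧ c3 = 3*k + 2)) :
    CohomologyFree ![k, c2, c3, k + 1, 1] := by
  refine (cohomologyFree_iff _).mpr fun m ε hε => ⟨fun huniv => ?_, fun i j => ?_⟩
  · have h₄ := eq_univ_iff_forall.mp huniv 4
    have h₆ := eq_univ_iff_forall.mp huniv 6
    simp [mem_Nset_iff, rayForm] at h₄ h₆
    rcases hε with rfl | rfl <;> omega
  · rcases hε with rfl | rfl <;> fin_cases i <;> fin_cases j <;> simp [mem_Nset_iff, rayForm] <;>
      omega

/-- For `k ≥ 2`, the vector `(k, c₂, c₃, k+1, 1)` is cohomology-free iff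
`(c₂, c₃)` is one of `(2k, 3k+1)`, `(2k+1, 3k+1)`, `(2k+1, 3k+2)`. -/
theorem classification_c4_eq_c1_add_one (k : ℤ) (hk : 2 ≤ k) (c2 c3 : ℤ) :
    CohomologyFree ![k, c2, c3, k + 1, 1] ↔
      (c2 = 2*k ∧ c3 = 3*k + 1) ∨ (c2 = 2*k + 1 ∧ c3 = 3*k + 1) ∨
      (c2 = 2*k + 1 ∧ c3 = 3*k + 2) := by
  exact ⟨c2_c3_cases_of_cohomologyFree, cohomologyFree_of_c2_c3_cases hk⟩
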